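/- Let n ≥ 1, f ∈ Matₙ(ℂ) the matrix with (i+1,i) entries 1 and all other entries 0, b the subspace of upper triangular matrices, and h the subspace of diagonal matrices. If ψ is an N-invariant polynomial function on f + b that vanishes on f + h (i.e. ψ(f + d) = 0 for every diagonal matrix d), then ψ = 0 on all of f + b. Equivalently, the restriction map ℂ[f+b]^N → ℂ[f+h] is injective. -/

import Mathlib

open Matrix

/-- Evaluation of a polynomial in the `n²` matrix entries at a matrix `A`:
a polynomial function on `Matₙ(ℂ)`. -/
noncomputable def evalMat {n : ℕ} (P : MvPolynomial (Fin n × Fin n) ℂ)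
    (A : Matrix (Fin n) (Fin n) ℂ) : ℂ :=
  MvPolynomial.eval (fun q => A q.1 q.2) P

/-- The principal nilpotent matrix `f`, with entries `1` on the subdiagonal
and `0` elsewhere. -/
def fMat (n : ℕ) : Matrix (Fin n) (Fin n) ℂ :=
  Matrix.of fun i j => if (i : ℕ) = (j : ℕ) + 1 then 1 else 0

/-- A unipotent upper triangular matrix: upper triangular with all diagonal
entries equal to `1` (an element of the group `N`). -/
def IsUniUpper {n : ℕ} (u : Matrix (Fin n) (Fin n) ℂ) : Prop :=
  u.BlockTriangular id ∧ ∀ i : Fin n, u i i = 1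

/-- Membership in the affine subspace `f + b`, where `b` is the space of upper
triangular matrices. -/
def InFB {n : ℕ} (y : Matrix (Fin n) (Fin n) ℂ) : Prop :=
  (y - fMat n).BlockTriangular id

/-! Every `x ∈ f + b` is `N`-conjugate to the companion matrix of its characteristic polynomial:
the Krylov matrix with columns `x ^ k *ᵥ e₀` is unipotent upper triangular because the part of `x`
below the diagonal is that of `f`, and by Cayley–Hamilton it intertwines `x` with the companion
matrix. So an `N`-invariant function on `f + b` only depends on the characteristic polynomial, and
over `ℂ` every monic polynomial of degree `n` is the characteristic polynomial of some `f + d` with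
`d` diagonal. -/

open Polynomial Finset

namespace Matrix

variable {R : Type*} [CommRing R] {n : ℕ}

theorem pow_eq_neg_sum_coeff_charpoly_smul_pow [Nontrivial R] (x : Matrix (Fin n) (Fin n) R) :
    x ^ n = -∑ m ∈ range n, x.charpoly.coeff m • x ^ m := by
  have h := x.aeval_self_charpoly
  rw [x.charpoly_monic.as_sum, x.charpoly_natDegree_eq_dim, Fintype.card_fin] at h
  simp only [map_add, map_pow, aeval_X, map_sum, map_mul, aeval_C,
    ← Algebra.smul_def] at h
  exact eq_neg_of_add_eq_zero_left h

def krylov (x : Matrix (Fin n) (Fin n) R) (v : Fin n → R) : Matrix (Fin n) (Fin n) R :=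
  of fun i k => (x ^ (k : ℕ) *ᵥ v) i

def companion (n : ℕ) (p : R[X]) : Matrix (Fin n) (Fin n) R :=
  of fun i j => if (i : ℕ) = j + 1 then 1 else if (j : ℕ) = n - 1 then -p.coeff i else 0

theorem mul_krylov_apply (x : Matrix (Fin n) (Fin n) R) (v : Fin n → R) (i k : Fin n) :
    (x * krylov x v) i k = (x ^ ((k : ℕ) + 1) *ᵥ v) i := by
  rw [pow_succ', ← mulVec_mulVec]
  rfl

theorem mul_krylov [Nontrivial R] (x : Matrix (Fin n) (Fin n) R) (v : Fin n → R) :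
    x * krylov x v = krylov x v * companion n x.charpoly := by
  ext i k
  rw [mul_krylov_apply, mul_apply]
  by_cases hk : (k : ℕ) + 1 < n
  · rw [Finset.sum_eq_single (⟨k + 1, hk⟩ : Fin n)]
    · simp [companion, krylov]
    · intro j _ hj
      have : (j : ℕ) ≠ k + 1 := fun h => hj (Fin.ext h)
      simp [companion, this, show (k : ℕ) ≠ n - 1 by omega]
    · simp
  · have hkn : (k : ℕ) + 1 = n := by omega
    have hcompanion : ∀ j : Fin n, companion n x.charpoly j k = -x.charpoly.coeff j := by
      intro j
      simp only [companion, of_apply]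
      rw [if_neg (by omega), if_pos (by omega)]
    simp only [hcompanion, krylov, of_apply, mul_neg, Finset.sum_neg_distrib, hkn,
      x.pow_eq_neg_sum_coeff_charpoly_smul_pow, neg_mulVec, sum_mulVec, smul_mulVec, Pi.neg_apply,
      Finset.sum_apply, Pi.smul_apply, smul_eq_mul]
    rw [Fin.sum_univ_eq_sum_range (fun m => (x ^ m *ᵥ v) i * x.charpoly.coeff m) n]
    simp only [mul_comm]

end Matrix

theorem Polynomial.Monic.exists_prod_X_sub_C_eq {K : Type*} [Field K] [IsAlgClosed K] {p : K[X]}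
    (hp : p.Monic) {n : ℕ} (hn : p.natDegree = n) : ∃ d : Fin n → K, ∏ i, (X - C (d i)) = p := by
  have hcard : p.roots.toList.length = n := by
    rw [Multiset.length_toList, IsAlgClosed.card_roots_eq_natDegree, hn]
  refine ⟨fun i => p.roots.toList[Fin.cast hcard.symm i], ?_⟩
  conv_rhs => rw [← prod_multiset_X_sub_C_of_monic_of_roots_card_eq hp
    IsAlgClosed.card_roots_eq_natDegree, ← Multiset.prod_map_toList,
    ← Fin.prod_univ_fun_getElem]
  exact Fintype.prod_equiv (finCongr hcard.symm) _ _ fun _ => rfl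

section FAddB

variable {n : ℕ}

theorem InFB.apply_of_lt {x : Matrix (Fin n) (Fin n) ℂ} (hx : InFB x) {i j : Fin n} (hji : j < i) :
    x i j = if (i : ℕ) = j + 1 then 1 else 0 := by
  simpa [fMat, sub_eq_zero] using hx hji

theorem InFB.pow_mulVec_single_apply (hn : 1 ≤ n) {x : Matrix (Fin n) (Fin n) ℂ} (hx : InFB x)
    (k : ℕ) {i : Fin n} (hki : k ≤ i) :
    (x ^ k *ᵥ Pi.single ⟨0, hn⟩ 1) i = if (i : ℕ) = k then 1 else 0 := by
  induction k generalizing i with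
  | zero => simp [one_apply, Fin.ext_iff]
  | succ k ih =>
    have hk : k < n := by omega
    rw [pow_succ', ← mulVec_mulVec, mulVec, dotProduct,
      Finset.sum_eq_single_of_mem (⟨k, hk⟩ : Fin n) (Finset.mem_univ _)]
    · rw [hx.apply_of_lt (Fin.lt_def.2 (show k < i by omega)), ih le_rfl]
      simp
    · intro j _ hj
      have hj : (j : ℕ) ≠ k := fun h => hj (Fin.ext h)
      rcases lt_or_gt_of_ne hj with hjk | hkj
      · rw [hx.apply_of_lt (Fin.lt_def.2 (by omega)), if_neg (by omega), zero_mul]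
      · rw [ih hkj.le, if_neg hj, mul_zero]

theorem InFB.isUniUpper_krylov (hn : 1 ≤ n) {x : Matrix (Fin n) (Fin n) ℂ} (hx : InFB x) :
    IsUniUpper (krylov x (Pi.single ⟨0, hn⟩ 1)) := by
  refine ⟨fun i k hki => ?_, fun i => ?_⟩
  · replace hki : (k : ℕ) < i := hki
    simp only [krylov, of_apply]
    rw [hx.pow_mulVec_single_apply hn k hki.le, if_neg hki.ne']
  · simp only [krylov, of_apply]
    rw [hx.pow_mulVec_single_apply hn i le_rfl, if_pos rfl]

theorem IsUniUpper.isUnit {u : Matrix (Fin n) (Fin n) ℂ} (hu : IsUniUpper u) : IsUnit u := by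
  rw [isUnit_iff_isUnit_det, det_of_isUpperTriangular hu.1, Finset.prod_eq_one fun i _ => hu.2 i]
  exact isUnit_one

theorem inFB_companion (p : ℂ[X]) : InFB (companion n p) := by
  intro i j hji
  have hji : (j : ℕ) < i := hji
  have hin := i.isLt
  simp only [companion, fMat, Matrix.sub_apply, of_apply]
  rw [if_neg (show (j : ℕ) ≠ n - 1 by omega), sub_self]

theorem InFB.exists_isUniUpper_conj_companion (hn : 1 ≤ n) {x : Matrix (Fin n) (Fin n) ℂ}
    (hx : InFB x) :
    ∃ u : (Matrix (Fin n) (Fin n) ℂ)ˣ, IsUniUpper (u : Matrix (Fin n) (Fin n) ℂ) ∧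
      x = u * companion n x.charpoly * (u⁻¹ : (Matrix (Fin n) (Fin n) ℂ)ˣ) := by
  have hK := hx.isUniUpper_krylov hn
  refine ⟨hK.isUnit.unit, hK, ?_⟩
  rw [Units.eq_mul_inv_iff_mul_eq, IsUnit.unit_spec, mul_krylov]

theorem InFB.apply_eq_apply_companion_charpoly (hn : 1 ≤ n) {β : Type*}
    {ψ : Matrix (Fin n) (Fin n) ℂ → β}
    (hψ : ∀ (u : (Matrix (Fin n) (Fin n) ℂ)ˣ) (x : Matrix (Fin n) (Fin n) ℂ),
      IsUniUpper (u : Matrix (Fin n) (Fin n) ℂ) → InFB x →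
      ψ (u * x * (u⁻¹ : (Matrix (Fin n) (Fin n) ℂ)ˣ)) = ψ x)
    {x : Matrix (Fin n) (Fin n) ℂ} (hx : InFB x) : ψ x = ψ (companion n x.charpoly) := by
  obtain ⟨u, hu, hxu⟩ := hx.exists_isUniUpper_conj_companion hn
  conv_lhs => rw [hxu]
  exact hψ u _ hu (inFB_companion _)

theorem inFB_fMat_add_diagonal (d : Fin n → ℂ) : InFB (fMat n + diagonal d) := by
  simpa [InFB] using blockTriangular_diagonal d

theorem charpoly_fMat_add_diagonal (d : Fin n → ℂ) :
    (fMat n + diagonal d).charpoly = ∏ i, (X - C (d i)) := by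
  rw [← charpoly_transpose, charpoly_of_isUpperTriangular]
  · simp [fMat]
  · intro i j hij
    replace hij : j < i := hij
    have hji : (j : ℕ) < i := hij
    simp [fMat, diagonal_apply_ne d hij.ne, show (j : ℕ) ≠ i + 1 by omega]

end FAddB

/-- An `N`-invariant polynomial function on `f + b` vanishing on `f + h`
(`h` the diagonal matrices) vanishes on all of `f + b`: the restriction map
`ℂ[f+b]^N → ℂ[f+h]` is injective. -/
theorem restriction_to_f_add_h_injective (n : ℕ) (hn : 1 ≤ n)
    (P : MvPolynomial (Fin n × Fin n) ℂ)
    (hinv : ∀ (u : (Matrix (Fin n) (Fin n) ℂ)ˣ) (x : Matrix (Fin n) (Fin n) ℂ),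
      IsUniUpper (u : Matrix (Fin n) (Fin n) ℂ) → InFB x →
      evalMat P ((u : Matrix (Fin n) (Fin n) ℂ) * x *
        ((u⁻¹ : (Matrix (Fin n) (Fin n) ℂ)ˣ) : Matrix (Fin n) (Fin n) ℂ)) = evalMat P x)
    (hvan : ∀ d : Matrix (Fin n) (Fin n) ℂ, d.IsDiag → evalMat P (fMat n + d) = 0) :
    ∀ x : Matrix (Fin n) (Fin n) ℂ, InFB x → evalMat P x = 0 := by
  intro x hx
  obtain ⟨d, hd⟩ := x.charpoly_monic.exists_prod_X_sub_C_eq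
    (by rw [x.charpoly_natDegree_eq_dim, Fintype.card_fin])
  have hcharpoly : (fMat n + diagonal d).charpoly = x.charpoly :=
    (charpoly_fMat_add_diagonal d).trans hd
  rw [hx.apply_eq_apply_companion_charpoly hn hinv, ← hcharpoly,
    ← (inFB_fMat_add_diagonal d).apply_eq_apply_companion_charpoly hn hinv]
  exact hvan _ (isDiag_diagonal d)
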